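/- arXiv:2307.06769 — 4 statements merged into one kernel-verified Lean document; each statement's English description precedes it below -/
import Mathlib

section
/- Let (L,▷) be a pre-Lie algebra, U its universal enveloping algebra, and extend ⋆ : U × L → U by 1 ⋆ a = a and (a'·U) ⋆ a = a'·(U ⋆ a) − U ⋆ (a'▷a). Then the action is right-symmetric: (U ⋆ a) ⋆ a' = (U ⋆ a') ⋆ a for all a,a' ∈ L and U ∈ U. -/
/-!
Both sides of the identity are linear in `u`, so it suffices to check it on `1` and to show
that it is preserved under `u ↦ a'·u`. On `1` it is the statement `a⋆a' − a'⋆a = ⁅a, a'⁆` in `U`.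
For the inductive step, unfolding the recursion twice writes `((b·u) ⋆ a) ⋆ a'` as
`b·((u⋆a)⋆a') − (u⋆a)⋆(b▷a') − (u⋆(b▷a))⋆a'`, and by the hypothesis on `u` this expression is
symmetric in `a, a'`.
-/

namespace UniversalEnvelopingAlgebra

variable {R L : Type*} [CommRing R] [LieRing L] [LieAlgebra R L]

theorem mkAlgHom_surjective : Function.Surjective (mkAlgHom R L) :=
  RingCon.mkₐ_surjective (α := R) (ringCon R L)

theorem ι_lie (a b : L) : ι R ⁅a, b⁆ = ι R a * ι R b - ι R b * ι R a := by
  let _ : LieRing (UniversalEnvelopingAlgebra R L) := LieRing.ofAssociativeRing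
  let _ : LieAlgebra R (UniversalEnvelopingAlgebra R L) := LieAlgebra.ofAssociativeAlgebra
  rw [LieHom.map_lie, Ring.lie_def]

theorem induction_ι_mul {C : UniversalEnvelopingAlgebra R L → Prop} (one : C 1)
    (add : ∀ u v, C u → C v → C (u + v)) (smul : ∀ (r : R) u, C u → C (r • u))
    (ι_mul : ∀ x u, C u → C (ι R x * u)) (u : UniversalEnvelopingAlgebra R L) : C u := by
  suffices h : ∀ w, C w → C (u * w) by simpa using h 1 one
  obtain ⟨x, rfl⟩ := mkAlgHom_surjective u
  induction x using TensorAlgebra.induction with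
  | algebraMap r =>
    intro w hw
    rw [AlgHom.commutes, ← Algebra.smul_def]
    exact smul r w hw
  | ι x => exact ι_mul x
  | mul x y hx hy =>
    intro w hw
    rw [map_mul, mul_assoc]
    exact hx _ (hy w hw)
  | add x y hx hy =>
    intro w hw
    rw [map_add, add_mul]
    exact add _ _ (hx w hw) (hy w hw)

end UniversalEnvelopingAlgebra

open UniversalEnvelopingAlgebra

section GuinOudom

variable {R L : Type*} [CommRing R] [LieRing L] [LieAlgebra R L] {t : L →ₗ[R] L →ₗ[R] L}
  {st : UniversalEnvelopingAlgebra R L →ₗ[R] L →ₗ[R] UniversalEnvelopingAlgebra R L}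

theorem guinOudom_ι_action (h1 : ∀ a : L, st 1 a = ι R a)
    (hrec : ∀ (a' : L) (u : UniversalEnvelopingAlgebra R L) (a : L),
      st (ι R a' * u) a = ι R a' * st u a - st u (t a' a)) (x y : L) :
    st (ι R x) y = ι R x * ι R y - ι R (t x y) := by
  simpa only [mul_one, h1] using hrec x 1 y

theorem guinOudom_one_action_symm (hbr : ∀ a b : L, ⁅a, b⁆ = t a b - t b a)
    (h1 : ∀ a : L, st 1 a = ι R a)
    (hrec : ∀ (a' : L) (u : UniversalEnvelopingAlgebra R L) (a : L),
      st (ι R a' * u) a = ι R a' * st u a - st u (t a' a)) (a a' : L) :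
    st (st 1 a) a' = st (st 1 a') a := by
  rw [h1, h1, guinOudom_ι_action h1 hrec, guinOudom_ι_action h1 hrec, sub_eq_sub_iff_sub_eq_sub,
    ← ι_lie, hbr, map_sub]

theorem guinOudom_ι_mul_action_symm
    (hrec : ∀ (a' : L) (u : UniversalEnvelopingAlgebra R L) (a : L),
      st (ι R a' * u) a = ι R a' * st u a - st u (t a' a))
    {u : UniversalEnvelopingAlgebra R L} (hu : ∀ a a', st (st u a) a' = st (st u a') a)
    (b a a' : L) : st (st (ι R b * u) a) a' = st (st (ι R b * u) a') a := by
  simp only [hrec, map_sub, LinearMap.sub_apply]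
  rw [hu a a', hu a (t b a'), hu (t b a) a']
  abel

end GuinOudom

open UniversalEnvelopingAlgebra in
theorem guinOudom_action_right_symmetric_general
    {R L : Type*} [CommRing R] [LieRing L] [LieAlgebra R L]
    (t : L →ₗ[R] L →ₗ[R] L)
    (hbr : ∀ a b : L, ⁅a, b⁆ = t a b - t b a)
    (st : UniversalEnvelopingAlgebra R L →ₗ[R] L →ₗ[R] UniversalEnvelopingAlgebra R L)
    (h1 : ∀ a : L, st 1 a = ι R a)
    (hrec : ∀ (a' : L) (u : UniversalEnvelopingAlgebra R L) (a : L),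
      st (ι R a' * u) a = ι R a' * st u a - st u (t a' a)) :
    ∀ (u : UniversalEnvelopingAlgebra R L) (a a' : L),
      st (st u a) a' = st (st u a') a := by
  intro u
  induction u using induction_ι_mul with
  | one => exact guinOudom_one_action_symm hbr h1 hrec
  | add u v hu hv => intro a a'; simp only [map_add, LinearMap.add_apply, hu a a', hv a a']
  | smul r u hu => intro a a'; simp only [map_smul, LinearMap.smul_apply, hu a a']
  | ι_mul b u hu => exact guinOudom_ι_mul_action_symm hrec hu b

open UniversalEnvelopingAlgebra in
/-- Let `(L,▷)` be a pre-Lie algebra (bracket `⁅a,b⁆ = a▷b − b▷a`), `U` its universal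
enveloping algebra, and `⋆ : U × L → U` the Guin–Oudom action, i.e. the bilinear map with
`1 ⋆ a = a` and `(a'·U) ⋆ a = a'·(U ⋆ a) − U ⋆ (a'▷a)`. Then the action is
right-symmetric: `(U ⋆ a) ⋆ a' = (U ⋆ a') ⋆ a`. -/
theorem guinOudom_action_right_symmetric
    {R L : Type*} [CommRing R] [LieRing L] [LieAlgebra R L]
    (t : L →ₗ[R] L →ₗ[R] L)
    (hpre : ∀ a b c : L, t a (t b c) - t (t a b) c = t b (t a c) - t (t b a) c)
    (hbr : ∀ a b : L, ⁅a, b⁆ = t a b - t b a)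
    (st : UniversalEnvelopingAlgebra R L →ₗ[R] L →ₗ[R] UniversalEnvelopingAlgebra R L)
    (h1 : ∀ a : L, st 1 a = ι R a)
    (hrec : ∀ (a' : L) (u : UniversalEnvelopingAlgebra R L) (a : L),
      st (ι R a' * u) a = ι R a' * st u a - st u (t a' a)) :
    ∀ (u : UniversalEnvelopingAlgebra R L) (a a' : L),
      st (st u a) a' = st (st u a') a :=
  guinOudom_action_right_symmetric_general t hbr st h1 hrec
end

section
/- Let (L,▷) be a pre-Lie algebra, U its universal enveloping algebra with coproduct Δ determined by Δ(a) = a⊗1 + 1⊗a for a ∈ L, and ⋆ : U × L → U the Guin–Oudom action defined by 1 ⋆ a = a and (a'U) ⋆ a = a'(U ⋆ a) − U ⋆ (a'▷a). Then Δ(U ⋆ a) = Σ (U₍₁₎ ⋆ a) ⊗ U₍₂₎ + U₍₁₎ ⊗ (U₍₂₎ ⋆ a), i.e. ⋆ is compatible with the coalgebra structure. -/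
/-!
The map `F_a = (· ⋆ a) ⊗ id + id ⊗ (· ⋆ a)` on `U ⊗ U` obeys the same recursion as `⋆`,
with left multiplication by `a'` replaced by left multiplication by `Δ a' = a' ⊗ 1 + 1 ⊗ a'`.
Hence the `u ∈ U` with `Δ (u ⋆ a) = F_a (Δ u)` for all `a` form a submodule containing `1`
and stable under left multiplication by `L`; since `L` generates `U`, it is all of `U`.
-/

open TensorProduct

theorem Algebra.adjoin_le_of_one_mem_of_mul_mem {R A : Type*} [CommSemiring R] [Semiring A]
    [Algebra R A] {s : Set A} {S : Submodule R A} (one_mem : 1 ∈ S)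
    (mul_mem : ∀ x ∈ s, ∀ u ∈ S, x * u ∈ S) :
    Subalgebra.toSubmodule (Algebra.adjoin R s) ≤ S := by
  rw [Algebra.adjoin_eq_span, Submodule.span_le]
  intro x hx
  induction hx using Submonoid.closure_induction_left with
  | one => exact one_mem
  | mul_left x hx _ _ hy => exact mul_mem x hx _ hy

namespace UniversalEnvelopingAlgebra

variable {R L : Type*} [CommRing R] [LieRing L] [LieAlgebra R L]

theorem adjoin_range_ι :
    Algebra.adjoin R (Set.range (ι R : L → UniversalEnvelopingAlgebra R L)) = ⊤ := by
  have hrange : Set.range (ι R : L → UniversalEnvelopingAlgebra R L)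
      = mkAlgHom R L '' Set.range (TensorAlgebra.ι R) := by
    rw [← Set.range_comp]; rfl
  rw [hrange, Algebra.adjoin_image, TensorAlgebra.adjoin_range_ι, Algebra.map_top,
    AlgHom.range_eq_top]
  exact RingCon.mkₐ_surjective _

theorem submodule_eq_top_of_one_mem_of_ι_mul_mem
    {S : Submodule R (UniversalEnvelopingAlgebra R L)} (one_mem : 1 ∈ S)
    (ι_mul_mem : ∀ (a : L) (u), u ∈ S → ι R a * u ∈ S) : S = ⊤ := by
  have h := Algebra.adjoin_le_of_one_mem_of_mul_mem (s := Set.range (ι R)) one_mem <| by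
    rintro _ ⟨a, rfl⟩ u hu
    exact ι_mul_mem a u hu
  rwa [adjoin_range_ι, Algebra.top_toSubmodule, top_le_iff] at h

end UniversalEnvelopingAlgebra

theorem rTensor_add_lTensor_primitive_mul {R A : Type*} [CommRing R] [Ring A] [Algebra R A]
    {f g : A →ₗ[R] A} {x : A} (hfg : ∀ u, f (x * u) = x * f u - g u) (z : A ⊗[R] A) :
    (f.rTensor A + f.lTensor A) ((x ⊗ₜ[R] 1 + 1 ⊗ₜ[R] x) * z)
      = (x ⊗ₜ[R] 1 + 1 ⊗ₜ[R] x) * (f.rTensor A + f.lTensor A) z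
        - (g.rTensor A + g.lTensor A) z := by
  induction z using TensorProduct.induction_on with
  | zero => simp
  | tmul u v =>
    simp only [LinearMap.add_apply, add_mul, Algebra.TensorProduct.tmul_mul_tmul, one_mul,
      map_add, LinearMap.rTensor_tmul, LinearMap.lTensor_tmul, hfg, sub_tmul, tmul_sub, mul_add]
    abel
  | add z w hz hw =>
    simp only [mul_add, map_add, hz, hw]
    abel

open UniversalEnvelopingAlgebra TensorProduct in
theorem guinOudom_action_coalgebra_morphism_general
    {R L : Type*} [CommRing R] [LieRing L] [LieAlgebra R L]
    (t : L →ₗ[R] L →ₗ[R] L)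
    (Δ : UniversalEnvelopingAlgebra R L →ₐ[R]
      TensorProduct R (UniversalEnvelopingAlgebra R L) (UniversalEnvelopingAlgebra R L))
    (hΔ : ∀ a : L, Δ (ι R a) = ι R a ⊗ₜ[R] 1 + 1 ⊗ₜ[R] ι R a)
    (st : UniversalEnvelopingAlgebra R L →ₗ[R] L →ₗ[R] UniversalEnvelopingAlgebra R L)
    (h1 : ∀ a : L, st 1 a = ι R a)
    (hrec : ∀ (a' : L) (u : UniversalEnvelopingAlgebra R L) (a : L),
      st (ι R a' * u) a = ι R a' * st u a - st u (t a' a)) :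
    ∀ (u : UniversalEnvelopingAlgebra R L) (a : L),
      Δ (st u a)
        = (TensorProduct.map (st.flip a)
              (LinearMap.id : UniversalEnvelopingAlgebra R L →ₗ[R] _)
            + TensorProduct.map (LinearMap.id : UniversalEnvelopingAlgebra R L →ₗ[R] _)
              (st.flip a)) (Δ u) := by
  set U := UniversalEnvelopingAlgebra R L
  let F : L → U ⊗[R] U →ₗ[R] U ⊗[R] U := fun a => (st.flip a).rTensor U + (st.flip a).lTensor U
  let S : Submodule R U := ⨅ a, LinearMap.eqLocus (Δ.toLinearMap ∘ₗ st.flip a) (F a ∘ₗ Δ)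
  have mem_S : ∀ u, u ∈ S ↔ ∀ a, Δ (st u a) = F a (Δ u) := fun u => by
    simp [S, Submodule.mem_iInf, LinearMap.mem_eqLocus]
  have one_mem : (1 : U) ∈ S := (mem_S 1).2 fun a => by
    rw [h1, map_one, hΔ]
    simp only [F, LinearMap.add_apply, Algebra.TensorProduct.one_def, LinearMap.rTensor_tmul,
      LinearMap.lTensor_tmul, LinearMap.flip_apply, h1]
  have ι_mul_mem : ∀ (a' : L) (u : U), u ∈ S → ι R a' * u ∈ S := fun a' u hu => by
    rw [mem_S] at hu ⊢
    intro a
    rw [hrec, map_sub, map_mul, hΔ, hu, hu, map_mul, hΔ,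
      rTensor_add_lTensor_primitive_mul (g := st.flip (t a' a)) fun v => hrec a' v a]
  intro u a
  have S_eq_top : S = ⊤ := submodule_eq_top_of_one_mem_of_ι_mul_mem one_mem ι_mul_mem
  exact (mem_S u).1 (S_eq_top ▸ Submodule.mem_top) a

open UniversalEnvelopingAlgebra TensorProduct in
/-- Let `(L,▷)` be a pre-Lie algebra, `U` its universal enveloping algebra with coproduct
`Δ` determined by `Δ(a) = a⊗1 + 1⊗a` for `a ∈ L`, and `⋆ : U × L → U` the Guin–Oudom
action (`1 ⋆ a = a`, `(a'U) ⋆ a = a'(U ⋆ a) − U ⋆ (a'▷a)`). Then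
`Δ(U ⋆ a) = Σ (U₍₁₎ ⋆ a) ⊗ U₍₂₎ + U₍₁₎ ⊗ (U₍₂₎ ⋆ a)`, i.e. `⋆` is compatible with the
coalgebra structure. -/
theorem guinOudom_action_coalgebra_morphism
    {R L : Type*} [CommRing R] [LieRing L] [LieAlgebra R L]
    (t : L →ₗ[R] L →ₗ[R] L)
    (hpre : ∀ a b c : L, t a (t b c) - t (t a b) c = t b (t a c) - t (t b a) c)
    (hbr : ∀ a b : L, ⁅a, b⁆ = t a b - t b a)
    (Δ : UniversalEnvelopingAlgebra R L →ₐ[R]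
      TensorProduct R (UniversalEnvelopingAlgebra R L) (UniversalEnvelopingAlgebra R L))
    (hΔ : ∀ a : L, Δ (ι R a) = ι R a ⊗ₜ[R] 1 + 1 ⊗ₜ[R] ι R a)
    (st : UniversalEnvelopingAlgebra R L →ₗ[R] L →ₗ[R] UniversalEnvelopingAlgebra R L)
    (h1 : ∀ a : L, st 1 a = ι R a)
    (hrec : ∀ (a' : L) (u : UniversalEnvelopingAlgebra R L) (a : L),
      st (ι R a' * u) a = ι R a' * st u a - st u (t a' a)) :
    ∀ (u : UniversalEnvelopingAlgebra R L) (a : L),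
      Δ (st u a)
        = (TensorProduct.map (st.flip a)
              (LinearMap.id : UniversalEnvelopingAlgebra R L →ₗ[R] _)
            + TensorProduct.map (LinearMap.id : UniversalEnvelopingAlgebra R L →ₗ[R] _)
              (st.flip a)) (Δ u) :=
  guinOudom_action_coalgebra_morphism_general t Δ hΔ st h1 hrec
end

section
/- With D = Σ_{(ℓ,k)} (k+1) z_{(ℓ,k+1)} ∂_{z_{(ℓ,k)}} and the pre-Lie product π ▷ π' = π Dπ' on polynomials, the left-multiplication extension ρ satisfies: for all β₁,…,β_k with [β_j] = 1, ρ(z^{β₁} ⋆ ⋯ ⋆ z^{β_k}) = z^{β₁}⋯z^{β_k} D^k as endomorphisms of the polynomial ring, where ⋆ is the Guin–Oudom action. -/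
open MvPolynomial

/-- The bracket `[β] = Σ (1−k) β(ℓ,k)` of a multi-index. -/
def mibrk {𝔏 : Type*} (β : (𝔏 × ℕ) →₀ ℕ) : ℤ :=
  β.sum fun x v => ((1 : ℤ) - x.2) * v

/-!
Read `st u p` as `u ⋆ p`, so that `starList st [p₁, …, pₙ] u = (⋯(u ⋆ p₁) ⋯) ⋆ pₙ`. The
Guin–Oudom recursion pulls a left factor `j q` out of such an iterated action, at the price of a
sum over the positions `i` at which `pᵢ` is replaced by `q Dpᵢ`. Applied to `1 ⋆ p = j p · 1`
and by induction on the length `n` of `ps`, the image under `ρ` of the action of `p :: ps` on `1`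
is `pD ∘ (Π ps)Dⁿ − Σᵢ (Π ps[i ↦ pDpᵢ])Dⁿ`. By the Leibniz rule the sum is `p D(Π ps) Dⁿ`, the
part of `pD ∘ (Π ps)Dⁿ` in which `D` falls on `Π ps`; what remains is `p (Π ps) Dⁿ⁺¹`.
-/

namespace GuinOudom

variable {K A U : Type*} [CommRing K] [CommRing A] [Algebra K A] [Ring U] [Algebra K U]

section Leibniz

variable (D : A →ₗ[K] A) (hLeib : ∀ p q : A, D (p * q) = D p * q + p * D q)
include hLeib

theorem map_one_eq_zero_of_leibniz : D 1 = 0 := by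
  simpa using hLeib 1 1

theorem mul_map_list_prod_of_leibniz (q : A) (ps : List A) :
    q * D ps.prod
      = ∑ i ∈ Finset.range ps.length, (ps.set i (q * D (ps.getD i 0))).prod := by
  induction ps with
  | nil => simp [map_one_eq_zero_of_leibniz D hLeib]
  | cons a ps ih =>
    rw [List.length_cons, Finset.sum_range_succ']
    simp only [List.getD_cons_zero, List.getD_cons_succ, List.set_cons_zero,
      List.set_cons_succ, List.prod_cons]
    rw [← Finset.mul_sum, ← ih, hLeib]
    ring

end Leibniz

def starList (st : U →ₗ[K] A →ₗ[K] U) : List A → U →ₗ[K] U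
  | [] => LinearMap.id
  | p :: ps => starList st ps ∘ₗ st.flip p

variable (st : U →ₗ[K] A →ₗ[K] U)

@[simp]
theorem starList_nil (u : U) : starList st [] u = u := rfl

@[simp]
theorem starList_cons (p : A) (ps : List A) (u : U) :
    starList st (p :: ps) u = starList st ps (st u p) := rfl

theorem foldl_eq_starList {ι : Type*} (f : ι → A) (l : List ι) (u : U) :
    l.foldl (fun u i => st u (f i)) u = starList st (l.map f) u := by
  induction l generalizing u with
  | nil => rfl
  | cons i l ih => exact ih _

variable (D : A →ₗ[K] A) (j : A →ₗ[K] U)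

theorem starList_mul_left
    (hrec : ∀ (q : A) (u : U) (p : A), st (j q * u) p = j q * st u p - st u (q * D p))
    (ps : List A) (q : A) (u : U) :
    starList st ps (j q * u)
      = j q * starList st ps u
        - ∑ i ∈ Finset.range ps.length, starList st (ps.set i (q * D (ps.getD i 0))) u := by
  induction ps generalizing u with
  | nil => simp
  | cons p ps ih =>
    rw [starList_cons, hrec, map_sub, ih, List.length_cons, Finset.sum_range_succ']
    simp only [List.getD_cons_zero, List.getD_cons_succ, List.set_cons_zero,
      List.set_cons_succ, starList_cons]
    rw [sub_sub]

theorem map_starList_one (hLeib : ∀ p q : A, D (p * q) = D p * q + p * D q)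
    (h1 : ∀ p, st 1 p = j p)
    (hrec : ∀ (q : A) (u : U) (p : A), st (j q * u) p = j q * st u p - st u (q * D p))
    (ρ : U →ₐ[K] Module.End K A) (hρ : ∀ p : A, ρ (j p) = LinearMap.mulLeft K p ∘ₗ D)
    (ps : List A) :
    ρ (starList st ps 1) = LinearMap.mulLeft K ps.prod ∘ₗ D ^ ps.length := by
  induction hn : ps.length generalizing ps with
  | zero =>
    rw [List.length_eq_zero_iff.mp hn]
    ext
    simp
  | succ n ih =>
    obtain ⟨p, ps, rfl⟩ := List.exists_cons_of_length_eq_add_one hn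
    have hlen : ps.length = n := Nat.succ_injective hn
    have ih_set (i : ℕ) (q : A) : ρ (starList st (ps.set i q) 1)
        = LinearMap.mulLeft K (ps.set i q).prod ∘ₗ D ^ n :=
      ih _ (by rw [List.length_set, hlen])
    rw [starList_cons, h1, ← mul_one (j p), starList_mul_left st D j hrec, map_sub, map_mul,
      hρ, map_sum, ih ps hlen]
    simp only [ih_set]
    ext f
    simp only [LinearMap.sub_apply, LinearMap.comp_apply, LinearMap.mulLeft_apply,
      LinearMap.sum_apply, Module.End.mul_apply, List.prod_cons, pow_succ', hLeib,
      ← Finset.sum_mul]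
    rw [← mul_map_list_prod_of_leibniz D hLeib]
    ring

end GuinOudom

theorem rho_guinOudom_eq_mul_pow_general {𝔏 : Type*}
    (D : MvPolynomial (𝔏 × ℕ) ℝ →ₗ[ℝ] MvPolynomial (𝔏 × ℕ) ℝ)
    (hLeib : ∀ p q : MvPolynomial (𝔏 × ℕ) ℝ, D (p * q) = D p * q + p * D q)
    {U : Type*} [Ring U] [Algebra ℝ U]
    -- `U` plays the role of the universal envelope of the pre-Lie algebra `π ▷ π' = π Dπ'`
    (j : MvPolynomial (𝔏 × ℕ) ℝ →ₗ[ℝ] U)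
    (st : U →ₗ[ℝ] MvPolynomial (𝔏 × ℕ) ℝ →ₗ[ℝ] U)
    (h1 : ∀ p, st 1 p = j p)
    (hrec : ∀ (q : MvPolynomial (𝔏 × ℕ) ℝ) (u : U) (p : MvPolynomial (𝔏 × ℕ) ℝ),
      st (j q * u) p = j q * st u p - st u (q * D p))
    (ρ : U →ₐ[ℝ] Module.End ℝ (MvPolynomial (𝔏 × ℕ) ℝ))
    (hρ : ∀ p : MvPolynomial (𝔏 × ℕ) ℝ,
      ρ (j p) = (LinearMap.mulLeft ℝ p) ∘ₗ D) :
    ∀ l : List ((𝔏 × ℕ) →₀ ℕ), (∀ β ∈ l, mibrk β = 1) →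
      ρ (l.foldl (fun u β => st u (monomial β (1 : ℝ))) 1)
        = (LinearMap.mulLeft ℝ ((l.map fun β => monomial β (1 : ℝ)).prod)) ∘ₗ
            ((D : Module.End ℝ (MvPolynomial (𝔏 × ℕ) ℝ)) ^ l.length) := by
  intro l _
  rw [GuinOudom.foldl_eq_starList, GuinOudom.map_starList_one st D j hLeib h1 hrec ρ hρ,
    List.length_map]

/-- With `D = Σ (k+1) z_{(ℓ,k+1)} ∂_{z_{(ℓ,k)}}` and the pre-Lie product `π ▷ π' = π Dπ'`
on polynomials, the left-multiplication extension `ρ` (the algebra morphism with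
`ρ(π) = π D(·)` on the universal envelope `U`) satisfies: for all `β₁,…,β_k` with
`[β_j] = 1`, `ρ(z^{β₁} ⋆ ⋯ ⋆ z^{β_k}) = z^{β₁}⋯z^{β_k} D^k` as endomorphisms of the
polynomial ring, where `⋆` is the Guin–Oudom action
(`1 ⋆ a = a`, `(bU) ⋆ a = b(U ⋆ a) − U ⋆ (b▷a)`). -/
theorem rho_guinOudom_eq_mul_pow {𝔏 : Type*} [Fintype 𝔏]
    (D : MvPolynomial (𝔏 × ℕ) ℝ →ₗ[ℝ] MvPolynomial (𝔏 × ℕ) ℝ)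
    (hLeib : ∀ p q : MvPolynomial (𝔏 × ℕ) ℝ, D (p * q) = D p * q + p * D q)
    (hgen : ∀ x : 𝔏 × ℕ, D (X x) = ((x.2 : ℝ) + 1) • X (x.1, x.2 + 1))
    {U : Type*} [Ring U] [Algebra ℝ U]
    -- `U` plays the role of the universal envelope of the pre-Lie algebra `π ▷ π' = π Dπ'`
    (j : MvPolynomial (𝔏 × ℕ) ℝ →ₗ[ℝ] U)
    (hcomm : ∀ p q : MvPolynomial (𝔏 × ℕ) ℝ,
      j p * j q - j q * j p = j (p * D q - q * D p))
    (st : U →ₗ[ℝ] MvPolynomial (𝔏 × ℕ) ℝ →ₗ[ℝ] U)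
    (h1 : ∀ p, st 1 p = j p)
    (hrec : ∀ (q : MvPolynomial (𝔏 × ℕ) ℝ) (u : U) (p : MvPolynomial (𝔏 × ℕ) ℝ),
      st (j q * u) p = j q * st u p - st u (q * D p))
    (ρ : U →ₐ[ℝ] Module.End ℝ (MvPolynomial (𝔏 × ℕ) ℝ))
    (hρ : ∀ p : MvPolynomial (𝔏 × ℕ) ℝ,
      ρ (j p) = (LinearMap.mulLeft ℝ p) ∘ₗ D) :
    ∀ l : List ((𝔏 × ℕ) →₀ ℕ), (∀ β ∈ l, mibrk β = 1) →
      ρ (l.foldl (fun u β => st u (monomial β (1 : ℝ))) 1)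
        = (LinearMap.mulLeft ℝ ((l.map fun β => monomial β (1 : ℝ)).prod)) ∘ₗ
            ((D : Module.End ℝ (MvPolynomial (𝔏 × ℕ) ℝ)) ^ l.length) :=
  rho_guinOudom_eq_mul_pow_general D hLeib j st h1 hrec ρ hρ
end

section
/- Let D be the derivation above and for each ℓ ∈ 𝔏, define π ▷_ℓ π' as the polynomial obtained by applying Σ_k (1/k!)(D^k π) ∂_{z_{(ℓ,k)}} to π'. Then for each ℓ, ▷_ℓ is a pre-Lie product on the span T of monomials z^γ with [γ] = 1, and the family {▷_ℓ}_{ℓ∈𝔏} forms a multi pre-Lie algebra: π ▷_ℓ (π' ▷_{ℓ'} π'') − (π ▷_ℓ π') ▷_{ℓ'} π'' = π' ▷_{ℓ'} (π ▷_ℓ π'') − (π' ▷_{ℓ'} π) ▷_ℓ π'' for all ℓ, ℓ'. -/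
open MvPolynomial

/-- `T` : the span of the monomials `z^γ` with `[γ] = 1`. -/
noncomputable def Tspan (𝔏 : Type*) : Submodule ℝ (MvPolynomial (𝔏 × ℕ) ℝ) :=
  Submodule.span ℝ {p | ∃ γ : (𝔏 × ℕ) →₀ ℕ, mibrk γ = 1 ∧ p = monomial γ (1 : ℝ)}

/-- `π ▷_ℓ π' := (Σ_k (1/k!)(D^k π) ∂_{z_{(ℓ,k)}}) π'` (the sum is effectively finite). -/
noncomputable def triIns {𝔏 : Type*} [DecidableEq 𝔏]
    (D : MvPolynomial (𝔏 × ℕ) ℝ →ₗ[ℝ] MvPolynomial (𝔏 × ℕ) ℝ) (ℓ : 𝔏)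
    (π π' : MvPolynomial (𝔏 × ℕ) ℝ) : MvPolynomial (𝔏 × ℕ) ℝ :=
  ∑ x ∈ π'.vars.filter (fun x => x.1 = ℓ),
    ((Nat.factorial x.2 : ℝ))⁻¹ •
      (((D : Module.End ℝ (MvPolynomial (𝔏 × ℕ) ℝ)) ^ x.2) π * pderiv x π')

/-! The operation `π ▷_ℓ ·` is the polynomial vector field `δ_ℓ π = Σ_k (D^k π / k!) ∂_{(ℓ,k)}`,
i.e. the derivation sending `z_{(ℓ,k)}` to `D^k π / k!` and the other variables to `0`.

For any two polynomial vector fields `d_f, d_g` (with `d_f z_i = f i`) the commutator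
`[d_f, d_g]` is the vector field `d_{d_f ∘ g - d_g ∘ f}`, so `d_f d_g - d_{d_f ∘ g}` is symmetric
in `f` and `g`. The multi pre-Lie identity is this symmetry for `f = δ_ℓ π`, `g = δ_{ℓ'} π'`,
once we know that the coefficients of `δ_{ℓ'} (π ▷_ℓ π')` are `δ_ℓ π` applied to those of
`δ_{ℓ'} π'`. That holds because `δ_ℓ π` commutes with `D`: their commutator is a derivation, and
it kills every `z_{(ℓ,k)}` because `(k+1) / (k+1)! = 1 / k!`.

Closure of `T`: `[·]` is a weight grading, `D` lowers weight by one and so `D^k π / k!` has weight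
`[z_{(ℓ,k)}] + [π] - 1`; hence `δ_ℓ π` raises weights by `[π] - 1`, which is `0` on `T`. -/

namespace MvPolynomial

section Derivations

variable {σ R : Type*}

theorem derivation_eq_sum_pderiv_mul [CommSemiring R]
    (d : Derivation R (MvPolynomial σ R) (MvPolynomial σ R)) (p : MvPolynomial σ R) :
    d p = ∑ i ∈ p.vars, pderiv i p * d (X i) := by
  classical
  let E : Derivation R (MvPolynomial σ R) (MvPolynomial σ R) := ∑ i ∈ p.vars, d (X i) • pderiv i
  have hE (q : MvPolynomial σ R) : E q = ∑ i ∈ p.vars, pderiv i q * d (X i) := by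
    change Derivation.coeFnAddMonoidHom (∑ i ∈ p.vars, d (X i) • pderiv i) q = _
    simp only [map_sum, Finset.sum_apply, Derivation.coeFnAddMonoidHom_apply,
      Derivation.smul_apply, smul_eq_mul, mul_comm]
  rw [← hE]
  refine derivation_eq_of_forall_mem_vars fun i hi => ?_
  rw [hE, Finset.sum_eq_single_of_mem i hi fun j _ hji => by rw [pderiv_X_of_ne hji.symm, zero_mul],
    pderiv_X_self, one_mul]

theorem mkDerivation_associator_comm [CommRing R] (f g : σ → MvPolynomial σ R)
    (q : MvPolynomial σ R) :
    mkDerivation R f (mkDerivation R g q) - mkDerivation R (fun i => mkDerivation R f (g i)) q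
      = mkDerivation R g (mkDerivation R f q)
        - mkDerivation R (fun i => mkDerivation R g (f i)) q := by
  have hcomm : ⁅mkDerivation R f, mkDerivation R g⁆
      = mkDerivation R (fun i => mkDerivation R f (g i))
        - mkDerivation R (fun i => mkDerivation R g (f i)) :=
    derivation_ext fun i => by
      simp only [Derivation.commutator_apply, Derivation.coe_sub, Pi.sub_apply, mkDerivation_X]
  have hq := congrArg (· q) hcomm
  simp only [Derivation.commutator_apply, Derivation.coe_sub, Pi.sub_apply] at hq
  linear_combination hq

end Derivations

theorem IsWeightedHomogeneous.derivation {σ R M : Type*} [CommSemiring R] [AddCommMonoid M]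
    {w : σ → M} {c m : M} (d : Derivation R (MvPolynomial σ R) (MvPolynomial σ R))
    (hd : ∀ i, (d (X i)).IsWeightedHomogeneous w (w i + c)) {p : MvPolynomial σ R}
    (hp : p.IsWeightedHomogeneous w m) : (d p).IsWeightedHomogeneous w (m + c) := by
  induction hp using IsWeightedHomogeneous.induction_on with
  | zero => simpa using isWeightedHomogeneous_zero R w (m + c)
  | add p q _ _ hp hq => simpa only [map_add] using hp.add hq
  | monomial s r hs =>
    have hd' : d = mkDerivation R fun i => d (X i) :=
      derivation_ext fun i => (mkDerivation_X R (fun i => d (X i)) i).symm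
    rw [hd', mkDerivation_monomial, Finsupp.sum, ← hs]
    refine Submodule.smul_mem (weightedHomogeneousSubmodule R w _) r
      (Submodule.sum_mem _ fun i hi => ?_)
    have hle : Finsupp.single i 1 ≤ s :=
      Finsupp.single_le_iff.mpr (Nat.pos_of_ne_zero (Finsupp.mem_support_iff.mp hi))
    have hsplit : Finsupp.weight w s = Finsupp.weight w (s - Finsupp.single i 1) + w i := by
      rw [← one_smul ℕ (w i), ← Finsupp.weight_single, ← map_add, tsub_add_cancel_of_le hle]
    rw [mem_weightedHomogeneousSubmodule, smul_eq_mul, hsplit, add_assoc]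
    exact (isWeightedHomogeneous_monomial w _ _ rfl).mul (hd i)

end MvPolynomial

section

variable {𝔏 : Type*}

def bracketWeight (x : 𝔏 × ℕ) : ℤ := 1 - x.2

theorem mibrk_eq_weight (γ : (𝔏 × ℕ) →₀ ℕ) : mibrk γ = Finsupp.weight bracketWeight γ := by
  simp only [mibrk, Finsupp.weight_apply, bracketWeight, nsmul_eq_mul, mul_comm]

theorem Tspan_eq_weightedHomogeneousSubmodule :
    Tspan 𝔏 = weightedHomogeneousSubmodule ℝ bracketWeight 1 := by
  rw [weightedHomogeneousSubmodule_eq_finsupp_supported, AddMonoidAlgebra.supported_eq_span_single,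
    Tspan]
  congr 1
  ext p
  simp [mibrk_eq_weight, eq_comm, single_eq_monomial]

noncomputable def insertionCoeff [DecidableEq 𝔏] (D : Module.End ℝ (MvPolynomial (𝔏 × ℕ) ℝ))
    (ℓ : 𝔏) (π : MvPolynomial (𝔏 × ℕ) ℝ) (x : 𝔏 × ℕ) : MvPolynomial (𝔏 × ℕ) ℝ :=
  if x.1 = ℓ then (x.2.factorial : ℝ)⁻¹ • (D ^ x.2) π else 0

theorem triIns_eq_mkDerivation [DecidableEq 𝔏]
    (D : MvPolynomial (𝔏 × ℕ) ℝ →ₗ[ℝ] MvPolynomial (𝔏 × ℕ) ℝ) (ℓ : 𝔏)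
    (π π' : MvPolynomial (𝔏 × ℕ) ℝ) :
    triIns D ℓ π π' = mkDerivation ℝ (insertionCoeff D ℓ π) π' := by
  rw [derivation_eq_sum_pderiv_mul, triIns, Finset.sum_filter]
  refine Finset.sum_congr rfl fun x _ => ?_
  simp only [mkDerivation_X, insertionCoeff]
  split_ifs <;> simp [mul_comm]

section

variable (d : Derivation ℝ (MvPolynomial (𝔏 × ℕ) ℝ) (MvPolynomial (𝔏 × ℕ) ℝ))
  (hgen : ∀ x : 𝔏 × ℕ, d (X x) = ((x.2 : ℝ) + 1) • X (x.1, x.2 + 1))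

include hgen

theorem isWeightedHomogeneous_pow_apply {m : ℤ} {p : MvPolynomial (𝔏 × ℕ) ℝ}
    (hp : p.IsWeightedHomogeneous bracketWeight m) (k : ℕ) :
    (((d : Module.End ℝ _) ^ k) p).IsWeightedHomogeneous bracketWeight (m - k) := by
  induction k with
  | zero => simpa using hp
  | succ k ih =>
    rw [pow_succ', Module.End.mul_apply, Nat.cast_succ, ← sub_sub]
    refine ih.derivation d fun x => ?_
    rw [hgen, ← mem_weightedHomogeneousSubmodule]
    refine Submodule.smul_mem _ _ ((mem_weightedHomogeneousSubmodule ..).mpr ?_)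
    convert isWeightedHomogeneous_X ℝ bracketWeight (x.1, x.2 + 1) using 1
    simp only [bracketWeight, Nat.cast_succ]
    ring

variable [DecidableEq 𝔏]

theorem isWeightedHomogeneous_insertionCoeff (ℓ : 𝔏) {m : ℤ} {π : MvPolynomial (𝔏 × ℕ) ℝ}
    (hπ : π.IsWeightedHomogeneous bracketWeight m) (x : 𝔏 × ℕ) :
    (insertionCoeff d ℓ π x).IsWeightedHomogeneous bracketWeight (bracketWeight x + (m - 1)) := by
  unfold insertionCoeff
  split_ifs
  · rw [← mem_weightedHomogeneousSubmodule]
    refine Submodule.smul_mem _ _ ((mem_weightedHomogeneousSubmodule ..).mpr ?_)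
    convert isWeightedHomogeneous_pow_apply d hgen hπ x.2 using 1
    simp only [bracketWeight]
    ring
  · exact isWeightedHomogeneous_zero ℝ _ _

theorem isWeightedHomogeneous_triIns (ℓ : 𝔏) {m n : ℤ} {π π' : MvPolynomial (𝔏 × ℕ) ℝ}
    (hπ : π.IsWeightedHomogeneous bracketWeight m)
    (hπ' : π'.IsWeightedHomogeneous bracketWeight n) :
    (triIns d ℓ π π').IsWeightedHomogeneous bracketWeight (n + (m - 1)) := by
  rw [triIns_eq_mkDerivation]
  exact hπ'.derivation _ fun x => by
    simpa only [mkDerivation_X] using isWeightedHomogeneous_insertionCoeff d hgen ℓ hπ x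

theorem commutator_mkDerivation_insertionCoeff (ℓ : 𝔏) (π : MvPolynomial (𝔏 × ℕ) ℝ) :
    ⁅d, mkDerivation ℝ (insertionCoeff d ℓ π)⁆ = 0 := by
  refine derivation_ext fun x => ?_
  rw [Derivation.commutator_apply, hgen, Derivation.map_smul, mkDerivation_X, mkDerivation_X,
    Derivation.zero_apply, sub_eq_zero]
  unfold insertionCoeff
  split_ifs
  · rw [Derivation.map_smul, pow_succ', Module.End.mul_apply, smul_smul, Nat.factorial_succ,
      Derivation.coeFn_coe]
    congr 1
    push_cast
    field_simp
  · simp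

theorem pow_apply_mkDerivation_insertionCoeff (ℓ : 𝔏) (π q : MvPolynomial (𝔏 × ℕ) ℝ) (k : ℕ) :
    ((d : Module.End ℝ _) ^ k) (mkDerivation ℝ (insertionCoeff d ℓ π) q)
      = mkDerivation ℝ (insertionCoeff d ℓ π) (((d : Module.End ℝ _) ^ k) q) := by
  have hcomm (q) : d (mkDerivation ℝ (insertionCoeff d ℓ π) q)
      = mkDerivation ℝ (insertionCoeff d ℓ π) (d q) := by
    simpa [Derivation.commutator_apply, sub_eq_zero] using
      congrArg (· q) (commutator_mkDerivation_insertionCoeff d hgen ℓ π)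
  induction k generalizing q with
  | zero => rfl
  | succ k ih =>
    rw [pow_succ, Module.End.mul_apply, Module.End.mul_apply, ← ih, Derivation.coeFn_coe, hcomm]

theorem insertionCoeff_mkDerivation_insertionCoeff (ℓ ℓ' : 𝔏) (π π' : MvPolynomial (𝔏 × ℕ) ℝ) :
    insertionCoeff d ℓ' (mkDerivation ℝ (insertionCoeff d ℓ π) π')
      = fun x => mkDerivation ℝ (insertionCoeff d ℓ π) (insertionCoeff d ℓ' π' x) := by
  funext x
  rw [insertionCoeff, insertionCoeff]
  split_ifs
  · rw [Derivation.map_smul, pow_apply_mkDerivation_insertionCoeff d hgen]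
  · rw [map_zero]

end

end

theorem triIns_multiPreLie_general {𝔏 : Type*} [DecidableEq 𝔏]
    (D : MvPolynomial (𝔏 × ℕ) ℝ →ₗ[ℝ] MvPolynomial (𝔏 × ℕ) ℝ)
    (hLeib : ∀ p q : MvPolynomial (𝔏 × ℕ) ℝ, D (p * q) = D p * q + p * D q)
    (hgen : ∀ x : 𝔏 × ℕ, D (X x) = ((x.2 : ℝ) + 1) • X (x.1, x.2 + 1)) :
    (∀ ℓ : 𝔏, ∀ π ∈ Tspan 𝔏, ∀ π' ∈ Tspan 𝔏, triIns D ℓ π π' ∈ Tspan 𝔏)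
    ∧ (∀ ℓ ℓ' : 𝔏, ∀ π ∈ Tspan 𝔏, ∀ π' ∈ Tspan 𝔏, ∀ π'' ∈ Tspan 𝔏,
        triIns D ℓ π (triIns D ℓ' π' π'') - triIns D ℓ' (triIns D ℓ π π') π''
          = triIns D ℓ' π' (triIns D ℓ π π'') - triIns D ℓ (triIns D ℓ' π' π) π'') := by
  obtain ⟨d, rfl⟩ : ∃ d : Derivation ℝ (MvPolynomial (𝔏 × ℕ) ℝ) (MvPolynomial (𝔏 × ℕ) ℝ),
      (d : MvPolynomial (𝔏 × ℕ) ℝ →ₗ[ℝ] MvPolynomial (𝔏 × ℕ) ℝ) = D :=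
    ⟨Derivation.mk' D fun p q => by rw [hLeib, smul_eq_mul, smul_eq_mul, add_comm, mul_comm q],
      rfl⟩
  simp only [Derivation.coeFn_coe] at hgen
  simp only [Tspan_eq_weightedHomogeneousSubmodule, mem_weightedHomogeneousSubmodule]
  refine ⟨fun ℓ π hπ π' hπ' => ?_, fun ℓ ℓ' π _ π' _ π'' _ => ?_⟩
  · simpa using isWeightedHomogeneous_triIns d hgen ℓ hπ hπ'
  · simp only [triIns_eq_mkDerivation, insertionCoeff_mkDerivation_insertionCoeff d hgen]
    exact mkDerivation_associator_comm _ _ _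

/-- For each `ℓ ∈ 𝔏`, `▷_ℓ` maps `T × T` into `T`, each `▷_ℓ` is a pre-Lie product on `T`,
and the family `{▷_ℓ}` forms a multi pre-Lie algebra:
`π ▷_ℓ (π' ▷_{ℓ'} π'') − (π ▷_ℓ π') ▷_{ℓ'} π'' = π' ▷_{ℓ'} (π ▷_ℓ π'') − (π' ▷_{ℓ'} π) ▷_ℓ π''`. -/
theorem triIns_multiPreLie {𝔏 : Type*} [Fintype 𝔏] [DecidableEq 𝔏]
    (D : MvPolynomial (𝔏 × ℕ) ℝ →ₗ[ℝ] MvPolynomial (𝔏 × ℕ) ℝ)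
    (hLeib : ∀ p q : MvPolynomial (𝔏 × ℕ) ℝ, D (p * q) = D p * q + p * D q)
    (hgen : ∀ x : 𝔏 × ℕ, D (X x) = ((x.2 : ℝ) + 1) • X (x.1, x.2 + 1)) :
    (∀ ℓ : 𝔏, ∀ π ∈ Tspan 𝔏, ∀ π' ∈ Tspan 𝔏, triIns D ℓ π π' ∈ Tspan 𝔏)
    ∧ (∀ ℓ ℓ' : 𝔏, ∀ π ∈ Tspan 𝔏, ∀ π' ∈ Tspan 𝔏, ∀ π'' ∈ Tspan 𝔏,
        triIns D ℓ π (triIns D ℓ' π' π'') - triIns D ℓ' (triIns D ℓ π π') π''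
          = triIns D ℓ' π' (triIns D ℓ π π'') - triIns D ℓ (triIns D ℓ' π' π) π'') :=
  triIns_multiPreLie_general D hLeib hgen
end
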